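/- Define f : [0,1] → ℝ by f(x) = (4 − 3x) / ((2 + x)²(3 − x)²), and define q : [0,1] × [0,1] → ℝ by: for x ≤ 1/2, q(x, y) = 4·𝟙{y ≤ x} + 2·𝟙{x ≤ y ≤ 1 − x} + 𝟙{y ≥ 1 − x}; and for x ≥ 1/2, q(x, y) = 4·𝟙{y ≤ 1 − x} + 3·𝟙{1 − x ≤ y ≤ x} + 𝟙{y ≥ x}. Then f solves the fixed-point integral equation f(y) = ∫₀¹ (q(x, y)/(2 + x)) f(x) dx for every y ∈ [0, 1]. -/

import Mathlib

/-!
Write the integrand as `q(x, y) g(x)` with `g(x) = f(x) / (2 + x)`, a rational function with the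
explicit primitive `G` found by partial fractions. For fixed `y`, the points `y` and `1 - y` cut
`[0, 1]` into three intervals on which `x ↦ q(x, y)` is constant, with values `2, 4, 3` when
`y ≤ 1/2` and `2, 1, 3` when `y > 1/2`. In both cases the integral collapses to
`G(1 - y) - 2 G(y) + 3 G(1) - 2 G(0)`, which simplifies to `f(y)`.
-/

open Set

/-- The transition jump density `q(x, y)` of the gap process: for `x ≤ 1/2`,
`q(x, y) = 4·𝟙{y ≤ x} + 2·𝟙{x ≤ y ≤ 1 − x} + 𝟙{y ≥ 1 − x}`, and for `x ≥ 1/2`,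
`q(x, y) = 4·𝟙{y ≤ 1 − x} + 3·𝟙{1 − x ≤ y ≤ x} + 𝟙{y ≥ x}`. -/
noncomputable def jumpDensity (x y : ℝ) : ℝ :=
  if x ≤ 1 / 2 then
    4 * (if y ≤ x then 1 else 0) + 2 * (if x ≤ y ∧ y ≤ 1 - x then 1 else 0) +
      (if 1 - x ≤ y then 1 else 0)
  else
    4 * (if y ≤ 1 - x then 1 else 0) + 3 * (if 1 - x ≤ y ∧ y ≤ x then 1 else 0) +
      (if x ≤ y then 1 else 0)

open MeasureTheory intervalIntegral

theorem integral_eq_const_mul_sub_of_eqOn_Ioo {F g G : ℝ → ℝ} {a b : ℝ} (k : ℝ) (hab : a ≤ b)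
    (hG : ∀ x ∈ Icc a b, HasDerivAt G (g x) x) (hg : IntervalIntegrable g volume a b)
    (hF : EqOn F (fun x ↦ k * g x) (Ioo a b)) :
    IntervalIntegrable F volume a b ∧ ∫ x in a..b, F x = k * (G b - G a) := by
  rw [← uIoo_of_le hab] at hF
  refine ⟨(hg.const_mul k).congr_uIoo hF.symm, ?_⟩
  rw [integral_congr_uIoo hF, intervalIntegral.integral_const_mul,
    integral_eq_sub_of_hasDerivAt (by rwa [uIcc_of_le hab]) hg]

theorem integral_eq_of_eqOn_Ioo_three {F g G : ℝ → ℝ} {a b c d : ℝ} (k₁ k₂ k₃ : ℝ)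
    (hab : a ≤ b) (hbc : b ≤ c) (hcd : c ≤ d)
    (hG : ∀ x ∈ Icc a d, HasDerivAt G (g x) x) (hg : IntervalIntegrable g volume a d)
    (h₁ : EqOn F (fun x ↦ k₁ * g x) (Ioo a b)) (h₂ : EqOn F (fun x ↦ k₂ * g x) (Ioo b c))
    (h₃ : EqOn F (fun x ↦ k₃ * g x) (Ioo c d)) :
    ∫ x in a..d, F x = k₁ * (G b - G a) + k₂ * (G c - G b) + k₃ * (G d - G c) := by
  have piece {u v : ℝ} (k : ℝ) (hau : a ≤ u) (huv : u ≤ v) (hvd : v ≤ d)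
      (h : EqOn F (fun x ↦ k * g x) (Ioo u v)) :
      IntervalIntegrable F volume u v ∧ ∫ x in u..v, F x = k * (G v - G u) :=
    integral_eq_const_mul_sub_of_eqOn_Ioo k huv
      (fun x hx ↦ hG x ⟨hau.trans hx.1, hx.2.trans hvd⟩)
      (hg.mono_set <| by
        rw [uIcc_of_le huv, uIcc_of_le (hab.trans (hbc.trans hcd))]
        exact Icc_subset_Icc hau hvd) h
  obtain ⟨hi₁, e₁⟩ := piece k₁ le_rfl hab (hbc.trans hcd) h₁
  obtain ⟨hi₂, e₂⟩ := piece k₂ hab hbc hcd h₂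
  obtain ⟨hi₃, e₃⟩ := piece k₃ (hab.trans hbc) hcd le_rfl h₃
  rw [← integral_add_adjacent_intervals (hi₁.trans hi₂) hi₃,
    ← integral_add_adjacent_intervals hi₁ hi₂, e₁, e₂, e₃]

theorem jumpDensity_of_lt_min {x y : ℝ} (h : x < min y (1 - y)) : jumpDensity x y = 2 := by
  unfold jumpDensity
  grind

theorem jumpDensity_of_mem_Ioo {x y : ℝ} (h : x ∈ Ioo (min y (1 - y)) (max y (1 - y))) :
    jumpDensity x y = if y ≤ 1 / 2 then 4 else 1 := by
  unfold jumpDensity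
  grind

theorem jumpDensity_of_max_lt {x y : ℝ} (h : max y (1 - y) < x) : jumpDensity x y = 3 := by
  unfold jumpDensity
  grind

noncomputable def densityDivRate (x : ℝ) : ℝ := (4 - 3 * x) / ((2 + x) ^ 3 * (3 - x) ^ 2)

noncomputable def densityDivRatePrimitive (x : ℝ) : ℝ :=
  -(1 / 25) * (2 + x)⁻¹ - 1 / 5 * ((2 + x) ^ 2)⁻¹ - 1 / 25 * (3 - x)⁻¹

theorem hasDerivAt_densityDivRatePrimitive {x : ℝ} (h₂ : 2 + x ≠ 0) (h₃ : 3 - x ≠ 0) :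
    HasDerivAt densityDivRatePrimitive (densityDivRate x) x := by
  have d₂ : HasDerivAt (fun x : ℝ ↦ 2 + x) 1 x := (hasDerivAt_id x).const_add 2
  have d₃ : HasDerivAt (fun x : ℝ ↦ 3 - x) (-1) x := (hasDerivAt_id x).const_sub 3
  refine (((d₂.inv h₂).const_mul (-(1 / 25))).sub
    (((d₂.pow 2).inv (pow_ne_zero 2 h₂)).const_mul (1 / 5))).sub
    ((d₃.inv h₃).const_mul (1 / 25)) |>.congr_deriv ?_
  simp only [densityDivRate, Pi.pow_apply]
  field_simp
  ring

theorem continuousOn_densityDivRate : ContinuousOn densityDivRate (Icc 0 1) :=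
  ContinuousOn.div (by fun_prop) (by fun_prop) fun x hx ↦ by
    have : 0 < 2 + x := by linarith [hx.1]
    have : 0 < 3 - x := by linarith [hx.2]
    positivity

theorem integral_jumpDensity_mul_densityDivRate {y : ℝ} (hy : y ∈ Icc (0 : ℝ) 1) :
    ∫ x in (0 : ℝ)..1, jumpDensity x y * densityDivRate x =
      (4 - 3 * y) / ((2 + y) ^ 2 * (3 - y) ^ 2) := by
  obtain ⟨hy₀, hy₁⟩ := hy
  have hsplit := integral_eq_of_eqOn_Ioo_three (G := densityDivRatePrimitive) 2
    (if y ≤ 1 / 2 then 4 else 1) 3 (le_min hy₀ (by linarith)) min_le_max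
    (max_le hy₁ (by linarith))
    (fun x hx ↦ hasDerivAt_densityDivRatePrimitive (by linarith [hx.1]) (by linarith [hx.2]))
    (continuousOn_densityDivRate.intervalIntegrable_of_Icc zero_le_one)
    (fun x hx ↦ congrArg (· * densityDivRate x) (jumpDensity_of_lt_min hx.2))
    (fun x hx ↦ congrArg (· * densityDivRate x) (jumpDensity_of_mem_Ioo hx))
    (fun x hx ↦ congrArg (· * densityDivRate x) (jumpDensity_of_max_lt hx.1))
  have hvalue : densityDivRatePrimitive (1 - y) - 2 * densityDivRatePrimitive y +
      3 * densityDivRatePrimitive 1 - 2 * densityDivRatePrimitive 0 =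
        (4 - 3 * y) / ((2 + y) ^ 2 * (3 - y) ^ 2) := by
    have h₂ : 2 + y ≠ 0 := by linarith
    have h₃ : 3 - y ≠ 0 := by linarith
    simp only [densityDivRatePrimitive, show (2 : ℝ) + (1 - y) = 3 - y by ring,
      show (3 : ℝ) - (1 - y) = 2 + y by ring]
    field_simp
    ring
  rw [hsplit, ← hvalue]
  rcases le_or_gt y (1 / 2) with hy | hy
  · rw [min_eq_left (by linarith), max_eq_right (by linarith), if_pos hy]
    ring
  · rw [min_eq_right (by linarith), max_eq_left (by linarith), if_neg (by linarith)]
    ring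

/-- The function `f(x) = (4 − 3x) / ((2 + x)²(3 − x)²)` solves the fixed-point equation
`f(y) = ∫₀¹ (q(x, y)/(2 + x)) f(x) dx` for every `y ∈ [0, 1]`. -/
theorem embedded_chain_invariant_density (f : ℝ → ℝ)
    (hf : ∀ x : ℝ, f x = (4 - 3 * x) / ((2 + x) ^ 2 * (3 - x) ^ 2)) :
    ∀ y ∈ Icc (0 : ℝ) 1,
      f y = ∫ x in (0 : ℝ)..1, jumpDensity x y / (2 + x) * f x := by
  intro y hy
  have hintegrand (x : ℝ) : jumpDensity x y / (2 + x) * f x =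
      jumpDensity x y * densityDivRate x := by
    rw [hf, densityDivRate, div_mul_div_comm, ← mul_div_assoc]
    congr 1
    ring
  simp only [hintegrand]
  rw [integral_jumpDensity_mul_densityDivRate hy, hf]
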